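/- Let p ∈ (1,∞], let ρ ∈ L^p(0,1) satisfy ρ(x) > 0 for a.e. x ∈ (0,1), and let (α₀,β₀), (α₁,β₁) ∈ ℝ² ∖ {(0,0)}. Then there exist λ* > 0 and C > 0 such that for all u ∈ H: ∫₀¹ u'(x)² dx + λ* ∫₀¹ ρ(x) u(x)² dx + a_b(u,u) ≥ C ‖u‖²_{H¹(0,1)}. -/

import Mathlib

open MeasureTheory Set Filter Topology


-- Cauchy-Schwarz
lemma my_cs {ν : Measure ℝ} [IsFiniteMeasure ν] {f : ℝ → ℝ} (hf : MemLp f 2 ν) :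
    (∫ x, f x ∂ν) ^ 2 ≤ (ν Set.univ).toReal * ∫ x, f x ^ 2 ∂ν := by
  have h2 : (ENNReal.ofReal 2) = 2 := by norm_num
  have habs : MemLp (fun x => |f x|) (ENNReal.ofReal 2) ν := by rw [h2]; exact hf.abs
  have hone : MemLp (fun _ : ℝ => (1:ℝ)) (ENNReal.ofReal 2) ν := by rw [h2]; exact memLp_const 1
  have hconj : Real.HolderConjugate 2 2 := by constructor <;> norm_num
  have key := integral_mul_le_Lp_mul_Lq_of_nonneg hconj
    (Filter.Eventually.of_forall fun x => abs_nonneg (f x))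
    (Filter.Eventually.of_forall fun _ => zero_le_one) habs hone
  simp only [mul_one] at key
  have hsq : ∀ x, |f x| ^ (2:ℝ) = f x ^ 2 := fun x => by
    rw [show ((2:ℝ)) = ((2:ℕ):ℝ) by norm_num, Real.rpow_natCast, sq_abs]
  have hone2 : ∀ x : ℝ, (1:ℝ) ^ (2:ℝ) = (1:ℝ) := fun _ => Real.one_rpow 2
  simp only [hsq] at key
  rw [show (fun a : ℝ => (1:ℝ) ^ (2:ℝ)) = (fun _ : ℝ => (1:ℝ)) from funext (fun x => Real.one_rpow 2)] at key
  rw [integral_const, smul_eq_mul, mul_one] at key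
  set a := ∫ x, f x ^ 2 ∂ν with ha
  set b := (ν Set.univ).toReal with hb
  have ha0 : 0 ≤ a := integral_nonneg fun x => sq_nonneg _
  have hb0 : 0 ≤ b := ENNReal.toReal_nonneg
  have h1 : |∫ x, f x ∂ν| ≤ ∫ x, |f x| ∂ν := by
    simpa [Real.norm_eq_abs] using norm_integral_le_integral_norm (μ := ν) f
  have hsq2 : (a ^ ((1:ℝ)/2) * b ^ ((1:ℝ)/2)) ^ 2 = a * b := by
    rw [mul_pow, ← Real.rpow_natCast (a ^ _) 2, ← Real.rpow_natCast (b ^ _) 2,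
      ← Real.rpow_mul ha0, ← Real.rpow_mul hb0]
    norm_num
  calc (∫ x, f x ∂ν) ^ 2 = |∫ x, f x ∂ν| ^ 2 := (sq_abs _).symm
    _ ≤ (∫ x, |f x| ∂ν) ^ 2 := by
        apply pow_le_pow_left₀ (abs_nonneg _) h1
    _ ≤ (a ^ ((1:ℝ)/2) * b ^ ((1:ℝ)/2)) ^ 2 := by
        apply pow_le_pow_left₀ (integral_nonneg fun x => abs_nonneg _) key
    _ = b * a := by rw [hsq2, mul_comm]


lemma key_set {a b : ℝ} (hab : a < b) (ha : 0 ≤ a) (hb : b ≤ 1) (g : ℝ → ℝ)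
    (hgm : Measurable g)
    (hgpos : ∀ᵐ x ∂(volume.restrict (Ioo (0:ℝ) 1)), 0 < g x) :
    ∃ δ : ℝ, 0 < δ ∧ ∃ E : Set ℝ, MeasurableSet E ∧ E ⊆ Ioo a b ∧ 0 < volume E ∧
      ∀ x ∈ E, δ ≤ g x := by
  have hsub : Ioo a b ⊆ Ioo (0:ℝ) 1 := Ioo_subset_Ioo ha hb
  by_contra hcon
  push_neg at hcon
  -- every candidate set has measure zero
  have hA : ∀ n : ℕ, volume (Ioo a b ∩ {x | 1/(n+1:ℝ) ≤ g x}) = 0 := by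
    intro n
    have hmeas : MeasurableSet (Ioo a b ∩ {x | 1/(n+1:ℝ) ≤ g x}) :=
      measurableSet_Ioo.inter (hgm measurableSet_Ici)
    have hδ : (0:ℝ) < 1/(n+1:ℝ) := by positivity
    have := hcon (1/(n+1:ℝ)) hδ (Ioo a b ∩ {x | 1/(n+1:ℝ) ≤ g x}) hmeas
      inter_subset_left
    by_contra hne
    obtain ⟨x, hx, hlt⟩ := this (pos_iff_ne_zero.mpr hne)
    exact absurd hx.2 (not_le.mpr hlt)
  have hU : volume (⋃ n : ℕ, (Ioo a b ∩ {x | 1/(n+1:ℝ) ≤ g x})) = 0 :=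
    measure_iUnion_null hA
  -- the set where g ≤ 0 inside Ioo 0 1 is null
  have hneg : volume ({x | ¬ 0 < g x} ∩ Ioo (0:ℝ) 1) = 0 := by
    have := hgpos
    rw [ae_iff] at this
    have hm : MeasurableSet {x : ℝ | ¬ 0 < g x} := by
      have he : {x : ℝ | ¬ 0 < g x} = g ⁻¹' Iic 0 := by ext x; simp [not_lt]
      rw [he]; exact hgm measurableSet_Iic
    rwa [Measure.restrict_apply hm] at this
  have hcover : Ioo a b ⊆ (⋃ n : ℕ, (Ioo a b ∩ {x | 1/(n+1:ℝ) ≤ g x})) ∪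
      ({x | ¬ 0 < g x} ∩ Ioo (0:ℝ) 1) := by
    intro x hx
    by_cases hg : 0 < g x
    · left
      obtain ⟨n, hn⟩ := exists_nat_one_div_lt hg
      exact mem_iUnion.mpr ⟨n, hx, le_of_lt hn⟩
    · exact Or.inr ⟨hg, hsub hx⟩
  have : volume (Ioo a b) = 0 := by
    refine measure_mono_null hcover ?_
    exact le_antisymm (le_trans (measure_union_le _ _) (by rw [hU, hneg]; simp)) zero_le
  rw [Real.volume_Ioo] at this
  simp only [ENNReal.ofReal_eq_zero] at this
  linarith


lemma diff_sq_le (u u' : ℝ → ℝ)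
    (hu' : MemLp u' 2 (volume.restrict (Ioo (0:ℝ) 1)))
    (hftc : ∀ x ∈ Icc (0:ℝ) 1, u x = u 0 + ∫ t in (0:ℝ)..x, u' t)
    {x y : ℝ} (hx : x ∈ Icc (0:ℝ) 1) (hy : y ∈ Icc (0:ℝ) 1) (hyx : y ≤ x) :
    (u x - u y)^2 ≤ (x - y) * ∫ t in Ioo (0:ℝ) 1, u' t ^ 2 := by
  have hrestr : volume.restrict (Ioo (0:ℝ) 1) = volume.restrict (Ioc (0:ℝ) 1) :=
    Measure.restrict_congr_set Ioo_ae_eq_Ioc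
  have hu'Ioc : MemLp u' 2 (volume.restrict (Ioc (0:ℝ) 1)) := hrestr ▸ hu'
  haveI : IsFiniteMeasure (volume.restrict (Ioc (0:ℝ) 1)) :=
    ⟨by rw [Measure.restrict_apply_univ]; simp [Real.volume_Ioc]⟩
  have hmono : ∀ {c d : ℝ}, 0 ≤ c → d ≤ 1 → MemLp u' 2 (volume.restrict (Ioc c d)) := by
    intro c d hc hd
    exact hu'Ioc.mono_measure (Measure.restrict_mono (Ioc_subset_Ioc hc hd) le_rfl)
  have hfin : ∀ c d : ℝ, IsFiniteMeasure (volume.restrict (Ioc c d)) := fun c d =>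
    ⟨by rw [Measure.restrict_apply_univ]; simp [Real.volume_Ioc]⟩
  have hii : ∀ {c d : ℝ}, 0 ≤ c → c ≤ d → d ≤ 1 → IntervalIntegrable u' volume c d := by
    intro c d hc hcd hd
    rw [intervalIntegrable_iff_integrableOn_Ioc_of_le hcd]
    haveI := hfin c d
    exact (hmono hc hd).integrable one_le_two
  have h0x := hx.1
  have h0y := hy.1
  have hx1 := hx.2
  have hy1 := hy.2
  have heq : u x - u y = ∫ t in y..x, u' t := by
    rw [hftc x hx, hftc y hy]
    rw [add_sub_add_left_eq_sub]
    rw [← intervalIntegral.integral_interval_sub_left (hii le_rfl h0x hx1) (hii le_rfl h0y hy1)]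
  rw [heq, intervalIntegral.integral_of_le hyx]
  haveI := hfin y x
  have hcs := my_cs (hmono h0y hx1)
  have huniv : ((volume.restrict (Ioc y x)) Set.univ).toReal = x - y := by
    rw [Measure.restrict_apply_univ, Real.volume_Ioc, ENNReal.toReal_ofReal (by linarith)]
  rw [huniv] at hcs
  refine le_trans hcs (mul_le_mul_of_nonneg_left ?_ (by linarith))
  -- ∫ in Ioc y x, u'^2 ≤ ∫ in Ioo 0 1, u'^2
  rw [show (∫ t in Ioo (0:ℝ) 1, u' t ^ 2) = ∫ t in Ioc (0:ℝ) 1, u' t ^ 2 by rw [hrestr]]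
  refine setIntegral_mono_set hu'Ioc.integrable_sq ?_ ?_
  · exact Filter.Eventually.of_forall fun t => sq_nonneg _
  · exact HasSubset.Subset.eventuallyLE (Ioc_subset_Ioc h0y hx1)


theorem stmt_2 (p : ENNReal) (hp : 1 < p) (ρ : ℝ → ℝ)
    (hρ : MemLp ρ p (volume.restrict (Ioo (0:ℝ) 1)))
    (hρpos : ∀ᵐ x ∂(volume.restrict (Ioo (0:ℝ) 1)), 0 < ρ x)
    (α₀ β₀ α₁ β₁ : ℝ) (h0 : (α₀, β₀) ≠ (0, 0)) (h1 : (α₁, β₁) ≠ (0, 0)) :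
    ∃ lamStar C : ℝ, 0 < lamStar ∧ 0 < C ∧
      ∀ u u' : ℝ → ℝ,
        MemLp u' 2 (volume.restrict (Ioo (0:ℝ) 1)) →
        (∀ x ∈ Icc (0:ℝ) 1, u x = u 0 + ∫ t in (0:ℝ)..x, u' t) →
        (β₀ = 0 → u 0 = 0) → (β₁ = 0 → u 1 = 0) →
        C * ((∫ t in Ioo (0:ℝ) 1, (u t) ^ 2) + ∫ t in Ioo (0:ℝ) 1, (u' t) ^ 2)
          ≤ (∫ t in Ioo (0:ℝ) 1, (u' t) ^ 2)
            + lamStar * (∫ t in Ioo (0:ℝ) 1, ρ t * (u t) ^ 2)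
            + ((if β₁ ≠ 0 then α₁ / β₁ * (u 1) ^ 2 else 0)
                - (if β₀ ≠ 0 then α₀ / β₀ * (u 0) ^ 2 else 0)) := by
  haveI hfinμ : IsFiniteMeasure (volume.restrict (Ioo (0:ℝ) 1)) :=
    ⟨by rw [Measure.restrict_apply_univ]; simp [Real.volume_Ioo]⟩
  -- measurable version of ρ
  have hmeas := hρ.aestronglyMeasurable
  obtain ⟨g, hgdef⟩ : ∃ g' : ℝ → ℝ, g' = hmeas.mk ρ := ⟨_, rfl⟩
  have hgm : Measurable g := hgdef ▸ hmeas.stronglyMeasurable_mk.measurable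
  have hgρ : ρ =ᵐ[volume.restrict (Ioo (0:ℝ) 1)] g := hgdef ▸ hmeas.ae_eq_mk
  have hgpos : ∀ᵐ x ∂(volume.restrict (Ioo (0:ℝ) 1)), 0 < g x := by
    filter_upwards [hρpos, hgρ] with x hx1 hx2
    rwa [← hx2]
  -- constants
  obtain ⟨c₀, hc₀def⟩ : ∃ c : ℝ, c = (if β₀ ≠ 0 then α₀ / β₀ else 0) := ⟨_, rfl⟩
  obtain ⟨c₁, hc₁def⟩ : ∃ c : ℝ, c = (if β₁ ≠ 0 then α₁ / β₁ else 0) := ⟨_, rfl⟩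
  obtain ⟨K, hKdef⟩ : ∃ k : ℝ, k = |c₀| + |c₁| + 1 := ⟨_, rfl⟩
  have hKpos : 0 < K := by rw [hKdef]; positivity
  have hK1 : 1 ≤ K := by
    have := abs_nonneg c₀; have := abs_nonneg c₁; rw [hKdef]; linarith
  obtain ⟨η, hηdef⟩ : ∃ e : ℝ, e = 1 / (16 * K) := ⟨_, rfl⟩
  have hηpos : 0 < η := by rw [hηdef]; positivity
  have hηK : K * η = 1 / 16 := by rw [hηdef]; field_simp
  have hη16 : η ≤ 1 / 16 := by
    rw [hηdef]
    rw [div_le_div_iff₀ (by rw [hKdef]; positivity) (by norm_num)]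
    linarith
  -- the two sets near the endpoints
  obtain ⟨δ₀, hδ₀pos, E₀, hE₀m, hE₀s, hE₀pos, hE₀g⟩ :=
    key_set (show (0:ℝ) < η from hηpos) le_rfl (by linarith) g hgm hgpos
  obtain ⟨δ₁, hδ₁pos, E₁, hE₁m, hE₁s, hE₁pos, hE₁g⟩ :=
    key_set (show (1:ℝ) - η < 1 by linarith) (by linarith) le_rfl g hgm hgpos
  have hE₀sub : E₀ ⊆ Ioo (0:ℝ) 1 := hE₀s.trans (Ioo_subset_Ioo le_rfl (by linarith))
  have hE₁sub : E₁ ⊆ Ioo (0:ℝ) 1 := hE₁s.trans (Ioo_subset_Ioo (by linarith) le_rfl)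
  have hE₀fin : volume E₀ ≠ ⊤ :=
    (lt_of_le_of_lt (measure_mono hE₀sub) (by simp [Real.volume_Ioo])).ne
  have hE₁fin : volume E₁ ≠ ⊤ :=
    (lt_of_le_of_lt (measure_mono hE₁sub) (by simp [Real.volume_Ioo])).ne
  have hm₀pos : 0 < (volume E₀).toReal := ENNReal.toReal_pos hE₀pos.ne' hE₀fin
  have hm₁pos : 0 < (volume E₁).toReal := ENNReal.toReal_pos hE₁pos.ne' hE₁fin
  obtain ⟨A₀, hA₀def⟩ : ∃ a : ℝ, a = 2 / (δ₀ * (volume E₀).toReal) := ⟨_, rfl⟩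
  obtain ⟨A₁, hA₁def⟩ : ∃ a : ℝ, a = 2 / (δ₁ * (volume E₁).toReal) := ⟨_, rfl⟩
  have hA₀pos : 0 < A₀ := by rw [hA₀def]; positivity
  have hA₁pos : 0 < A₁ := by rw [hA₁def]; positivity
  have hAM₀ : A₀ = 2 / (δ₀ * (volume E₀).toReal) := hA₀def
  have hAM₁ : A₁ = 2 / (δ₁ * (volume E₁).toReal) := hA₁def
  refine ⟨K * (A₀ + A₁) + A₁ / 4 + 1, 1/4, by positivity, by norm_num, ?_⟩
  intro u u' hu' hftc hbc0 hbc1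
  obtain ⟨D, hDdef⟩ : ∃ d : ℝ, d = ∫ t in Ioo (0:ℝ) 1, u' t ^ 2 := ⟨_, rfl⟩
  rw [show (∫ t in Ioo (0:ℝ) 1, u' t ^ 2) = D from hDdef.symm]
  have hD0 : 0 ≤ D := hDdef ▸ integral_nonneg fun t => sq_nonneg _
  -- difference bound
  have hdiff : ∀ x ∈ Icc (0:ℝ) 1, ∀ y ∈ Icc (0:ℝ) 1, (u x - u y)^2 ≤ |x - y| * D := by
    intro x hx y hy
    rw [hDdef]
    rcases le_total y x with h | h
    · rw [abs_of_nonneg (by linarith)]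
      exact diff_sq_le u u' hu' hftc hx hy h
    · rw [abs_of_nonpos (by linarith), neg_sub,
        show (u x - u y)^2 = (u y - u x)^2 by ring]
      exact diff_sq_le u u' hu' hftc hy hx h
  have husq : ∀ x ∈ Icc (0:ℝ) 1, ∀ y ∈ Icc (0:ℝ) 1,
      u x ^ 2 ≤ 2 * (u y) ^ 2 + 2 * (|x - y| * D) := by
    intro x hx y hy
    have := hdiff x hx y hy
    nlinarith [sq_nonneg (u x - 2 * u y)]
  -- measurability and integrability of u², ρ u²
  have hu'Icc : IntegrableOn u' (Icc (0:ℝ) 1) volume := by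
    have heq : volume.restrict (Ioo (0:ℝ) 1) = volume.restrict (Icc (0:ℝ) 1) :=
      Measure.restrict_congr_set Ioo_ae_eq_Icc
    have h := hu'.integrable one_le_two
    rw [heq] at h
    exact h
  have hcontu : ContinuousOn (fun x => u 0 + ∫ t in (0:ℝ)..x, u' t) (Icc (0:ℝ) 1) := by
    have := intervalIntegral.continuousOn_primitive_interval (a := (0:ℝ)) (b := (1:ℝ)) (μ := volume)
      (f := u') (by rwa [uIcc_of_le zero_le_one])
    rw [uIcc_of_le zero_le_one] at this
    exact continuousOn_const.add this
  have hrIccIoo : volume.restrict (Icc (0:ℝ) 1) = volume.restrict (Ioo (0:ℝ) 1) :=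
    (Measure.restrict_congr_set Ioo_ae_eq_Icc).symm
  have humeas : AEStronglyMeasurable u (volume.restrict (Ioo (0:ℝ) 1)) := by
    have h1 : AEStronglyMeasurable (fun x => u 0 + ∫ t in (0:ℝ)..x, u' t)
        (volume.restrict (Ioo (0:ℝ) 1)) := by
      rw [← hrIccIoo]
      exact hcontu.aestronglyMeasurable measurableSet_Icc
    refine h1.congr ?_
    filter_upwards [ae_restrict_mem measurableSet_Ioo] with x hx
    exact (hftc x (Ioo_subset_Icc_self hx)).symm
  have hbound : ∀ x ∈ Icc (0:ℝ) 1, u x ^ 2 ≤ 2 * (u 0) ^ 2 + 2 * D := by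
    intro x hx
    have h := husq x hx 0 ⟨le_rfl, zero_le_one⟩
    have hx1 : |x - 0| ≤ 1 := by rw [abs_of_nonneg (by simpa using hx.1)]; simpa using hx.2
    nlinarith
  have hu2meas : AEStronglyMeasurable (fun t => u t ^ 2) (volume.restrict (Ioo (0:ℝ) 1)) :=
    (humeas.aemeasurable.pow_const 2).aestronglyMeasurable
  have hu2bdd : ∀ᵐ x ∂(volume.restrict (Ioo (0:ℝ) 1)), ‖u x ^ 2‖ ≤ 2 * (u 0) ^ 2 + 2 * D := by
    filter_upwards [ae_restrict_mem measurableSet_Ioo] with x hx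
    rw [Real.norm_eq_abs, abs_of_nonneg (sq_nonneg _)]
    exact hbound x (Ioo_subset_Icc_self hx)
  have hu2int : Integrable (fun t => u t ^ 2) (volume.restrict (Ioo (0:ℝ) 1)) :=
    Integrable.mono' (integrable_const _) hu2meas hu2bdd
  have hgint : Integrable g (volume.restrict (Ioo (0:ℝ) 1)) :=
    ((hρ.integrable hp.le).congr hgρ)
  have hgu2int : Integrable (fun t => g t * u t ^ 2) (volume.restrict (Ioo (0:ℝ) 1)) := by
    have := hgint.bdd_mul (c := 2 * (u 0) ^ 2 + 2 * D) hu2meas hu2bdd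
    exact this.congr (Eventually.of_forall fun x => by ring)
  have hρu2int : Integrable (fun t => ρ t * u t ^ 2) (volume.restrict (Ioo (0:ℝ) 1)) := by
    refine hgu2int.congr ?_
    filter_upwards [hgρ] with x hx
    rw [hx]
  obtain ⟨M, hMdef⟩ : ∃ m : ℝ, m = ∫ t in Ioo (0:ℝ) 1, ρ t * u t ^ 2 := ⟨_, rfl⟩
  rw [show (∫ t in Ioo (0:ℝ) 1, ρ t * u t ^ 2) = M from hMdef.symm]
  have hMg : M = ∫ t in Ioo (0:ℝ) 1, g t * u t ^ 2 := by
    rw [hMdef]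
    refine integral_congr_ae ?_
    filter_upwards [hgρ] with x hx
    rw [hx]
  have hM0 : 0 ≤ M := by
    rw [hMg]
    refine integral_nonneg_of_ae ?_
    filter_upwards [hgpos] with x hx
    positivity
  -- main claim: trace-type estimate using a good set E
  have claim : ∀ (E : Set ℝ) (δ : ℝ), MeasurableSet E → E ⊆ Ioo (0:ℝ) 1 →
      volume E ≠ 0 → volume E ≠ ⊤ → (∀ x ∈ E, δ ≤ g x) → 0 < δ →
      ∀ z ∈ Icc (0:ℝ) 1, ∀ s : ℝ, (∀ y ∈ E, |z - y| ≤ s) → 0 ≤ s →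
      u z ^ 2 ≤ 2 / (δ * (volume E).toReal) * M + 2 * (s * D) := by
    intro E δ hEm hEsub hEne hEfin hEg hδpos z hz s hs hs0
    have hu2Ioo : IntegrableOn (fun t => u t ^ 2) (Ioo (0:ℝ) 1) volume := hu2int
    have hu2E : IntegrableOn (fun t => u t ^ 2) E volume := hu2Ioo.mono_set hEsub
    obtain ⟨y, hyE, hyavg⟩ := exists_le_setAverage hEne hEfin hu2E
    rw [setAverage_eq, smul_eq_mul] at hyavg
    have hmE : 0 < (volume E).toReal := ENNReal.toReal_pos hEne hEfin
    -- ∫_E u² ≤ M / δ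
    have hEint : ∫ a in E, u a ^ 2 ≤ M / δ := by
      have hgu2Ioo : IntegrableOn (fun t => g t * u t ^ 2) (Ioo (0:ℝ) 1) volume := hgu2int
      have step1 : ∫ a in E, δ * u a ^ 2 ≤ ∫ a in E, g a * u a ^ 2 := by
        refine setIntegral_mono_on ((hu2E.const_mul δ)) (hgu2Ioo.mono_set hEsub) hEm ?_
        intro x hx
        exact mul_le_mul_of_nonneg_right (hEg x hx) (sq_nonneg _)
      rw [integral_const_mul] at step1
      have step2 : ∫ a in E, g a * u a ^ 2 ≤ M := by
        rw [hMg]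
        refine setIntegral_mono_set hgu2Ioo ?_ (HasSubset.Subset.eventuallyLE hEsub)
        filter_upwards [hgpos] with x hx
        positivity
      rw [le_div_iff₀ hδpos]
      linarith
    have hyIcc : y ∈ Icc (0:ℝ) 1 := Ioo_subset_Icc_self (hEsub hyE)
    have h2 := husq z hz y hyIcc
    have h3 : u y ^ 2 ≤ ((volume E).toReal)⁻¹ * (M / δ) := by
      refine le_trans hyavg ?_
      exact mul_le_mul_of_nonneg_left hEint (by positivity)
    have h4 : |z - y| * D ≤ s * D := mul_le_mul_of_nonneg_right (hs y hyE) hD0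
    have h5 : 2 / (δ * (volume E).toReal) * M = 2 * (((volume E).toReal)⁻¹ * (M / δ)) := by
      rw [div_mul_eq_mul_div, div_eq_mul_inv, mul_inv, div_eq_mul_inv]; ring
    linarith
  -- trace estimates
  have h1tr : u 1 ^ 2 ≤ A₁ * M + 2 * (η * D) := by
    rw [hAM₁]
    refine claim E₁ δ₁ hE₁m hE₁sub hE₁pos.ne' hE₁fin hE₁g hδ₁pos 1 ⟨zero_le_one, le_rfl⟩ η ?_ hηpos.le
    intro y hy
    have := hE₁s hy
    rw [abs_of_nonneg (by linarith [this.2])]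
    linarith [this.1]
  have h0tr : u 0 ^ 2 ≤ A₀ * M + 2 * (η * D) := by
    rw [hAM₀]
    refine claim E₀ δ₀ hE₀m hE₀sub hE₀pos.ne' hE₀fin hE₀g hδ₀pos 0 ⟨le_rfl, zero_le_one⟩ η ?_ hηpos.le
    intro y hy
    have := hE₀s hy
    rw [abs_of_nonpos (by linarith [this.1]), neg_sub]
    linarith [this.2]
  -- L² bound
  have hLbd : (∫ t in Ioo (0:ℝ) 1, u t ^ 2) ≤ A₁ * M + 2 * D := by
    have hpt : ∀ x ∈ Ioo (0:ℝ) 1, u x ^ 2 ≤ A₁ * M + 2 * D := by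
      intro x hx
      have h := claim E₁ δ₁ hE₁m hE₁sub hE₁pos.ne' hE₁fin hE₁g hδ₁pos x
        (Ioo_subset_Icc_self hx) 1 ?_ zero_le_one
      · rw [one_mul, ← hAM₁] at h; exact h
      · intro y hy
        have hy' := hE₁sub hy
        rw [abs_le]
        constructor <;> linarith [hx.1, hx.2, hy'.1, hy'.2]
    calc (∫ t in Ioo (0:ℝ) 1, u t ^ 2) ≤ ∫ _t in Ioo (0:ℝ) 1, (A₁ * M + 2 * D) := by
          refine setIntegral_mono_on hu2int (integrable_const _) measurableSet_Ioo hpt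
      _ = A₁ * M + 2 * D := by
          rw [setIntegral_const, smul_eq_mul, Real.volume_real_Ioo]
          norm_num
  -- rewrite the boundary term
  have hbdry : ((if β₁ ≠ 0 then α₁ / β₁ * (u 1) ^ 2 else 0)
      - (if β₀ ≠ 0 then α₀ / β₀ * (u 0) ^ 2 else 0)) = c₁ * u 1 ^ 2 - c₀ * u 0 ^ 2 := by
    rw [hc₀def, hc₁def]
    by_cases hb1' : β₁ ≠ 0 <;> by_cases hb0' : β₀ ≠ 0 <;> simp [hb1', hb0']
  rw [hbdry]
  -- final arithmetic
  have habs0 : |c₀| ≤ K := by rw [hKdef]; linarith [abs_nonneg c₁]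
  have habs1 : |c₁| ≤ K := by rw [hKdef]; linarith [abs_nonneg c₀]
  have hX₁ : (0:ℝ) ≤ A₁ * M + 2 * (η * D) := by
    have h1 := mul_nonneg hA₁pos.le hM0
    have h2 := mul_nonneg hηpos.le hD0
    linarith
  have hX₀ : (0:ℝ) ≤ A₀ * M + 2 * (η * D) := by
    have h1 := mul_nonneg hA₀pos.le hM0
    have h2 := mul_nonneg hηpos.le hD0
    linarith
  have e1 : -(c₁ * u 1 ^ 2) ≤ K * (A₁ * M) + (1/8) * D := by
    have s1 : -(c₁ * u 1 ^ 2) ≤ |c₁| * u 1 ^ 2 := by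
      rw [neg_mul_eq_neg_mul]
      exact mul_le_mul_of_nonneg_right (neg_le_abs c₁) (sq_nonneg _)
    have s2 : |c₁| * u 1 ^ 2 ≤ |c₁| * (A₁ * M + 2 * (η * D)) :=
      mul_le_mul_of_nonneg_left h1tr (abs_nonneg _)
    have s3 : |c₁| * (A₁ * M + 2 * (η * D)) ≤ K * (A₁ * M + 2 * (η * D)) :=
      mul_le_mul_of_nonneg_right habs1 hX₁
    have s4 : K * (A₁ * M + 2 * (η * D)) = K * (A₁ * M) + (1/8) * D := by
      linear_combination (2 * D) * hηK
    linarith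
  have e0 : c₀ * u 0 ^ 2 ≤ K * (A₀ * M) + (1/8) * D := by
    have s1 : c₀ * u 0 ^ 2 ≤ |c₀| * u 0 ^ 2 :=
      mul_le_mul_of_nonneg_right (le_abs_self c₀) (sq_nonneg _)
    have s2 : |c₀| * u 0 ^ 2 ≤ |c₀| * (A₀ * M + 2 * (η * D)) :=
      mul_le_mul_of_nonneg_left h0tr (abs_nonneg _)
    have s3 : |c₀| * (A₀ * M + 2 * (η * D)) ≤ K * (A₀ * M + 2 * (η * D)) :=
      mul_le_mul_of_nonneg_right habs0 hX₀
    have s4 : K * (A₀ * M + 2 * (η * D)) = K * (A₀ * M) + (1/8) * D := by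
      linear_combination (2 * D) * hηK
    linarith
  have hexp : (K * (A₀ + A₁) + A₁ / 4 + 1) * M = K * (A₀ * M) + K * (A₁ * M) + (A₁ * M) / 4 + M := by
    ring
  linarith [e1, e0, hLbd, hM0, hD0, hexp]
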